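/- arXiv:0712.1072 — 5 statements merged into one kernel-verified Lean document; each statement's English description precedes it below -/
import Mathlib

section
/- Let X₁ be a (Λ₀,Λ₁) k-morph and X₂ a (Λ₁,Λ₂) k-morph. Then the fibred product X₁ *_{Λ₁⁰} X₂ = {(x₁,x₂) : s(x₁)=r(x₂)} with r(x₁,x₂)=r(x₁), s(x₁,x₂)=s(x₂), and the map φ defined by composing φ₂ then φ₁ (i.e., φ((x₁,x₂),λ₂)=(λ₀,(x₁',x₂')) where φ₂(x₂,λ₂)=(λ₁,x₂') and φ₁(x₁,λ₁)=(λ₀,x₁')), is a (Λ₀,Λ₂) k-morph. In particular this φ is bijective and multiplicative. -/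
/-- A `k`-graph structure on a set `Obj` of vertices and a set `Path` of morphisms:
a countable small category together with a degree functor `d : Path → ℕ^k`
satisfying the unique factorisation property. Vertices are identified with
identity morphisms via `ident`.  Composition is a total function, constrained
only on composable pairs (`src p = rng q`). -/
structure KGraphStr (k : ℕ) (Obj : Type) (Path : Type) where
  src : Path → Obj
  rng : Path → Obj
  ident : Obj → Path
  comp : Path → Path → Path
  d : Path → Fin k → ℕ
  countable : Countable Path
  nonemptyObj : Nonempty Obj
  src_ident : ∀ v, src (ident v) = v
  rng_ident : ∀ v, rng (ident v) = v
  d_ident : ∀ v, d (ident v) = 0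
  src_comp : ∀ p q, src p = rng q → src (comp p q) = src q
  rng_comp : ∀ p q, src p = rng q → rng (comp p q) = rng p
  d_comp : ∀ p q, src p = rng q → d (comp p q) = d p + d q
  comp_ident : ∀ p, comp p (ident (src p)) = p
  ident_comp : ∀ p, comp (ident (rng p)) p = p
  comp_assoc : ∀ p q r, src p = rng q → src q = rng r →
    comp (comp p q) r = comp p (comp q r)
  factor : ∀ p (m n : Fin k → ℕ), d p = m + n →
    ∃! μν : Path × Path, src μν.1 = rng μν.2 ∧ d μν.1 = m ∧ d μν.2 = n ∧
      comp μν.1 μν.2 = p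

/-- A `(Λ,Γ)` `k`-morph: a countable set `X` with `r : X → Λ⁰`, `s : X → Γ⁰`
and a structure bijection `φ : X *_{Γ⁰} Γ → Λ *_{Λ⁰} X`, here encoded by its
two components `φl`, `φx` (constrained only on composable pairs) together
with the bijectivity condition `bij`. -/
structure KMorph {k : ℕ} {OΛ PΛ OΓ PΓ : Type}
    (Λ : KGraphStr k OΛ PΛ) (Γ : KGraphStr k OΓ PΓ) (X : Type) where
  countable : Countable X
  r : X → OΛ
  s : X → OΓ
  φl : X → PΓ → PΛ
  φx : X → PΓ → X
  src_φl : ∀ x γ, s x = Γ.rng γ → Λ.src (φl x γ) = r (φx x γ)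
  d_φl : ∀ x γ, s x = Γ.rng γ → Λ.d (φl x γ) = Γ.d γ
  s_φx : ∀ x γ, s x = Γ.rng γ → s (φx x γ) = Γ.src γ
  rng_φl : ∀ x γ, s x = Γ.rng γ → Λ.rng (φl x γ) = r x
  mult_φl : ∀ x γ₁ γ₂, s x = Γ.rng γ₁ → Γ.src γ₁ = Γ.rng γ₂ →
      φl x (Γ.comp γ₁ γ₂) = Λ.comp (φl x γ₁) (φl (φx x γ₁) γ₂)
  mult_φx : ∀ x γ₁ γ₂, s x = Γ.rng γ₁ → Γ.src γ₁ = Γ.rng γ₂ →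
      φx x (Γ.comp γ₁ γ₂) = φx (φx x γ₁) γ₂
  bij : ∀ lam x', Λ.src lam = r x' →
      ∃! p : X × PΓ, s p.1 = Γ.rng p.2 ∧ φl p.1 p.2 = lam ∧ φx p.1 p.2 = x'

/-- An isomorphism of `(Λ,Γ)` `k`-morphs: a bijection intertwining the
structure maps. -/
structure MorphIso {k : ℕ} {OΛ PΛ OΓ PΓ X Y : Type}
    {Λ : KGraphStr k OΛ PΛ} {Γ : KGraphStr k OΓ PΓ}
    (M : KMorph Λ Γ X) (N : KMorph Λ Γ Y) where
  θ : X ≃ Y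
  r_θ : ∀ x, N.r (θ x) = M.r x
  s_θ : ∀ x, N.s (θ x) = M.s x
  φl_θ : ∀ x γ, M.s x = Γ.rng γ → N.φl (θ x) γ = M.φl x γ
  φx_θ : ∀ x γ, M.s x = Γ.rng γ → N.φx (θ x) γ = θ (M.φx x γ)

/-- The underlying set `X₁ *_{Λ₁⁰} X₂` of the fibred product of two k-morphs. -/
def FibCarrier {k : ℕ} {O₀ P₀ O₁ P₁ O₂ P₂ X₁ X₂ : Type}
    {Λ₀ : KGraphStr k O₀ P₀} {Λ₁ : KGraphStr k O₁ P₁} {Λ₂ : KGraphStr k O₂ P₂}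
    (M₁ : KMorph Λ₀ Λ₁ X₁) (M₂ : KMorph Λ₁ Λ₂ X₂) : Type :=
  {p : X₁ × X₂ // M₁.s p.1 = M₂.r p.2}

/-- `P` is *the* fibred product k-morph of `M₁` and `M₂`:
`r(x₁,x₂) = r(x₁)`, `s(x₁,x₂) = s(x₂)`, and `φ` is obtained by passing a path
through `M₂` and then through `M₁`. -/
def IsFibProd {k : ℕ} {O₀ P₀ O₁ P₁ O₂ P₂ X₁ X₂ : Type}
    {Λ₀ : KGraphStr k O₀ P₀} {Λ₁ : KGraphStr k O₁ P₁} {Λ₂ : KGraphStr k O₂ P₂}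
    (M₁ : KMorph Λ₀ Λ₁ X₁) (M₂ : KMorph Λ₁ Λ₂ X₂)
    (P : KMorph Λ₀ Λ₂ (FibCarrier M₁ M₂)) : Prop :=
  (∀ p : FibCarrier M₁ M₂, P.r p = M₁.r p.1.1) ∧
  (∀ p : FibCarrier M₁ M₂, P.s p = M₂.s p.1.2) ∧
  (∀ (p : FibCarrier M₁ M₂) lam, P.s p = Λ₂.rng lam →
    P.φl p lam = M₁.φl p.1.1 (M₂.φl p.1.2 lam) ∧
    (P.φx p lam).1.1 = M₁.φx p.1.1 (M₂.φl p.1.2 lam) ∧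
    (P.φx p lam).1.2 = M₂.φx p.1.2 lam)

/-- `I` is the identity endomorph `I_Λ` on `Λ`: underlying set `Λ⁰`,
`r = s = id`, and `φ(r(λ),λ) = (λ, s(λ))`. -/
def IsIdMorph {k : ℕ} {O P : Type} {Λ : KGraphStr k O P}
    (I : KMorph Λ Λ O) : Prop :=
  (∀ v, I.r v = v) ∧ (∀ v, I.s v = v) ∧
  (∀ v lam, I.s v = Λ.rng lam → I.φl v lam = lam ∧ I.φx v lam = Λ.src lam)

/-- A morphism (degree-preserving functor) of k-graphs from `Γ` to `Λ`. -/
structure KGraphHom {k : ℕ} {OΓ PΓ OΛ PΛ : Type}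
    (Γ : KGraphStr k OΓ PΓ) (Λ : KGraphStr k OΛ PΛ) where
  vmap : OΓ → OΛ
  pmap : PΓ → PΛ
  src_pmap : ∀ p, Λ.src (pmap p) = vmap (Γ.src p)
  rng_pmap : ∀ p, Λ.rng (pmap p) = vmap (Γ.rng p)
  d_pmap : ∀ p, Λ.d (pmap p) = Γ.d p
  ident_pmap : ∀ v, pmap (Γ.ident v) = Λ.ident (vmap v)
  comp_pmap : ∀ p q, Γ.src p = Γ.rng q →
      pmap (Γ.comp p q) = Λ.comp (pmap p) (pmap q)

/-- `F : Γ → Λ` is a covering: a surjective k-graph morphism restricting to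
bijections `vΓ → F(v)Λ` and `Γv → ΛF(v)` for every vertex `v`. -/
def IsCovering {k : ℕ} {OΓ PΓ OΛ PΛ : Type}
    {Γ : KGraphStr k OΓ PΓ} {Λ : KGraphStr k OΛ PΛ}
    (F : KGraphHom Γ Λ) : Prop :=
  Function.Surjective F.pmap ∧
  (∀ v : OΓ, Set.BijOn F.pmap {p | Γ.rng p = v} {q | Λ.rng q = F.vmap v}) ∧
  (∀ v : OΓ, Set.BijOn F.pmap {p | Γ.src p = v} {q | Λ.src q = F.vmap v})

/-- `M` is the k-morph `X(F)` (also written `ₚX` for a covering `F = p`)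
associated with a k-graph morphism `F : Γ → Λ`: underlying set `Γ⁰`,
`r = F` on vertices, `s = id`, and `φ(r(γ), γ) = (F(γ), s(γ))`. -/
def IsXalpha {k : ℕ} {OΓ PΓ OΛ PΛ : Type}
    {Γ : KGraphStr k OΓ PΓ} {Λ : KGraphStr k OΛ PΛ}
    (F : KGraphHom Γ Λ) (M : KMorph Λ Γ OΓ) : Prop :=
  (∀ v, M.r v = F.vmap v) ∧ (∀ v, M.s v = v) ∧
  (∀ v γ, M.s v = Γ.rng γ → M.φl v γ = F.pmap γ ∧ M.φx v γ = Γ.src γ)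

/-- An isomorphism of (higher-rank) graph structures. -/
structure GraphIso {k : ℕ} {O P O' P' : Type}
    (S : KGraphStr k O P) (S' : KGraphStr k O' P') where
  ev : O ≃ O'
  ep : P ≃ P'
  src_ep : ∀ p, S'.src (ep p) = ev (S.src p)
  rng_ep : ∀ p, S'.rng (ep p) = ev (S.rng p)
  d_ep : ∀ p, S'.d (ep p) = S.d p
  ident_ep : ∀ v, ep (S.ident v) = S'.ident (ev v)
  comp_ep : ∀ p q, S.src p = S.rng q → ep (S.comp p q) = S'.comp (ep p) (ep q)

section FibAux

variable {k : ℕ} {O₀ P₀ O₁ P₁ O₂ P₂ X₁ X₂ : Type}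
    {Λ₀ : KGraphStr k O₀ P₀} {Λ₁ : KGraphStr k O₁ P₁} {Λ₂ : KGraphStr k O₂ P₂}
    (M₁ : KMorph Λ₀ Λ₁ X₁) (M₂ : KMorph Λ₁ Λ₂ X₂)

/-- composability of `M₂.φl p.1.2 γ` with `p.1.1` -/
theorem fib_comp₁ (p : FibCarrier M₁ M₂) {γ : P₂} (h : M₂.s p.1.2 = Λ₂.rng γ) :
    M₁.s p.1.1 = Λ₁.rng (M₂.φl p.1.2 γ) := by
  rw [M₂.rng_φl _ _ h]; exact p.2

theorem fib_pf (p : FibCarrier M₁ M₂) {γ : P₂} (h : M₂.s p.1.2 = Λ₂.rng γ) :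
    M₁.s (M₁.φx p.1.1 (M₂.φl p.1.2 γ)) = M₂.r (M₂.φx p.1.2 γ) := by
  rw [M₁.s_φx _ _ (fib_comp₁ M₁ M₂ p h), M₂.src_φl _ _ h]

noncomputable def fibφl (p : FibCarrier M₁ M₂) (γ : P₂) : P₀ :=
  M₁.φl p.1.1 (M₂.φl p.1.2 γ)

open Classical in
noncomputable def fibφx (p : FibCarrier M₁ M₂) (γ : P₂) : FibCarrier M₁ M₂ :=
  if h : M₂.s p.1.2 = Λ₂.rng γ then
    ⟨(M₁.φx p.1.1 (M₂.φl p.1.2 γ), M₂.φx p.1.2 γ), fib_pf M₁ M₂ p h⟩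
  else p

theorem fibφx_eq (p : FibCarrier M₁ M₂) {γ : P₂} (h : M₂.s p.1.2 = Λ₂.rng γ) :
    fibφx M₁ M₂ p γ =
      ⟨(M₁.φx p.1.1 (M₂.φl p.1.2 γ), M₂.φx p.1.2 γ), fib_pf M₁ M₂ p h⟩ := by
  unfold fibφx; exact dif_pos h

noncomputable def fibMorph : KMorph Λ₀ Λ₂ (FibCarrier M₁ M₂) where
  countable := by
    have := M₁.countable; have := M₂.countable
    exact Subtype.countable
  r p := M₁.r p.1.1
  s p := M₂.s p.1.2
  φl := fibφl M₁ M₂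
  φx := fibφx M₁ M₂
  src_φl p γ h := by
    rw [fibφx_eq M₁ M₂ p h]
    exact M₁.src_φl _ _ (fib_comp₁ M₁ M₂ p h)
  d_φl p γ h := by
    rw [fibφl, M₁.d_φl _ _ (fib_comp₁ M₁ M₂ p h), M₂.d_φl _ _ h]
  s_φx p γ h := by
    rw [fibφx_eq M₁ M₂ p h]
    exact M₂.s_φx _ _ h
  rng_φl p γ h := M₁.rng_φl _ _ (fib_comp₁ M₁ M₂ p h)
  mult_φl p γ₁ γ₂ h₁ h₂ := by
    rw [fibφx_eq M₁ M₂ p h₁]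
    show M₁.φl p.1.1 (M₂.φl p.1.2 (Λ₂.comp γ₁ γ₂)) = _
    rw [M₂.mult_φl _ _ _ h₁ h₂,
      M₁.mult_φl _ _ _ (fib_comp₁ M₁ M₂ p h₁)
        (by rw [M₂.src_φl _ _ h₁, ← M₂.rng_φl _ _ (by rwa [M₂.s_φx _ _ h₁])])]
    rfl
  mult_φx p γ₁ γ₂ h₁ h₂ := by
    have h₂' : M₂.s (M₂.φx p.1.2 γ₁) = Λ₂.rng γ₂ := by rwa [M₂.s_φx _ _ h₁]
    have hc : M₂.s p.1.2 = Λ₂.rng (Λ₂.comp γ₁ γ₂) := by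
      rw [Λ₂.rng_comp _ _ h₂]; exact h₁
    rw [fibφx_eq M₁ M₂ p hc, fibφx_eq M₁ M₂ p h₁]; erw [fibφx_eq M₁ M₂ _ h₂']
    have hl : M₂.φl p.1.2 (Λ₂.comp γ₁ γ₂)
        = Λ₁.comp (M₂.φl p.1.2 γ₁) (M₂.φl (M₂.φx p.1.2 γ₁) γ₂) :=
      M₂.mult_φl _ _ _ h₁ h₂
    have hcomp : Λ₁.src (M₂.φl p.1.2 γ₁) = Λ₁.rng (M₂.φl (M₂.φx p.1.2 γ₁) γ₂) := by
      rw [M₂.src_φl _ _ h₁, M₂.rng_φl _ _ h₂']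
    apply Subtype.ext
    refine Prod.ext ?_ ?_
    · show M₁.φx p.1.1 _ = M₁.φx _ _
      rw [hl, M₁.mult_φx _ _ _ (fib_comp₁ M₁ M₂ p h₁) hcomp]
    · exact M₂.mult_φx _ _ _ h₁ h₂
  bij lam x' hl := by
    obtain ⟨⟨x₁, γ₁⟩, ⟨hb₁, hb₂, hb₃⟩, hu₁⟩ := M₁.bij lam x'.1.1 hl
    have hsrc : Λ₁.src γ₁ = M₂.r x'.1.2 := by
      rw [← x'.2, ← hb₃, M₁.s_φx _ _ hb₁]
    obtain ⟨⟨x₂, γ₂⟩, ⟨hc₁, hc₂, hc₃⟩, hu₂⟩ := M₂.bij γ₁ x'.1.2 hsrc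
    have hx : M₁.s x₁ = M₂.r x₂ := by
      rw [hb₁, ← hc₂, M₂.rng_φl _ _ hc₁]
    refine ⟨(⟨(x₁, x₂), hx⟩, γ₂), ⟨hc₁, ?_, ?_⟩, ?_⟩
    · show M₁.φl x₁ (M₂.φl x₂ γ₂) = lam
      rw [hc₂, hb₂]
    · rw [fibφx_eq M₁ M₂ _ hc₁]
      apply Subtype.ext
      show (M₁.φx x₁ (M₂.φl x₂ γ₂), M₂.φx x₂ γ₂) = x'.1
      rw [hc₂, hb₃, hc₃]
    · rintro ⟨⟨⟨y₁, y₂⟩, hy⟩, δ⟩ ⟨hd₁, hd₂, hd₃⟩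
      -- unpack hd₃
      have hd₁' : M₂.s y₂ = Λ₂.rng δ := hd₁
      have hd3 := hd₃
      rw [fibφx_eq M₁ M₂ _ hd₁'] at hd3
      have hfst : M₁.φx y₁ (M₂.φl y₂ δ) = x'.1.1 :=
        congrArg (fun z : FibCarrier M₁ M₂ => z.1.1) hd3
      have hsnd : M₂.φx y₂ δ = x'.1.2 :=
        congrArg (fun z : FibCarrier M₁ M₂ => z.1.2) hd3
      have hcy : M₁.s y₁ = Λ₁.rng (M₂.φl y₂ δ) :=
        fib_comp₁ M₁ M₂ ⟨(y₁, y₂), hy⟩ hd₁'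
      have h1 := hu₁ (y₁, M₂.φl y₂ δ) ⟨hcy, hd₂, hfst⟩
      have hy1 : y₁ = x₁ := congrArg Prod.fst h1
      have hγ : M₂.φl y₂ δ = γ₁ := congrArg Prod.snd h1
      have h2 := hu₂ (y₂, δ) ⟨hd₁', hγ, hsnd⟩
      have hy2 : y₂ = x₂ := congrArg Prod.fst h2
      have hδ : δ = γ₂ := congrArg Prod.snd h2
      subst hy1 hy2 hδ
      rfl

theorem fibMorph_φx : (fibMorph M₁ M₂).φx = fibφx M₁ M₂ := rfl

end FibAux

/-- the fibred product `X₁ *_{Λ₁⁰} X₂` of a `(Λ₀,Λ₁)` k-morph and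
a `(Λ₁,Λ₂)` k-morph, with `r(x₁,x₂)=r(x₁)`, `s(x₁,x₂)=s(x₂)` and `φ` obtained
by applying `φ₂` then `φ₁`, is a `(Λ₀,Λ₂)` k-morph (in particular this `φ`
is bijective and multiplicative). -/
theorem fibProd_exists {k : ℕ} {O₀ P₀ O₁ P₁ O₂ P₂ X₁ X₂ : Type}
    {Λ₀ : KGraphStr k O₀ P₀} {Λ₁ : KGraphStr k O₁ P₁} {Λ₂ : KGraphStr k O₂ P₂}
    (M₁ : KMorph Λ₀ Λ₁ X₁) (M₂ : KMorph Λ₁ Λ₂ X₂) :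
    ∃ P : KMorph Λ₀ Λ₂ (FibCarrier M₁ M₂), IsFibProd M₁ M₂ P := by
  exact ⟨fibMorph M₁ M₂, fun p => rfl, fun p => rfl,
    fun p lam h => ⟨rfl, by rw [fibMorph_φx, fibφx_eq M₁ M₂ p h], by rw [fibMorph_φx, fibφx_eq M₁ M₂ p h]⟩⟩
end

section
/- Let p : Γ → Λ be a covering of k-graphs. Then Xₚ := Γ⁰ with r = id on Γ⁰, s = p restricted to vertices, and φ(r(γ), p(γ)) = (γ, s(γ)) (using unique path lifting to determine γ from p(γ) and r(γ)) is a well-defined (Γ,Λ) k-morph. -/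
section Aux

variable {k : ℕ} {OΓ PΓ OΛ PΛ : Type}
    {Γ : KGraphStr k OΓ PΓ} {Λ : KGraphStr k OΛ PΛ}
    (F : KGraphHom Γ Λ) (hF : IsCovering F)

include hF in
/-- unique path lifting -/
lemma covering_uniq_lift (v : OΓ) (lam : PΛ) (h : F.vmap v = Λ.rng lam) :
    ∃! γ : PΓ, Γ.rng γ = v ∧ F.pmap γ = lam := by
  obtain ⟨-, hrng, -⟩ := hF
  obtain ⟨hmaps, hinj, hsurj⟩ := hrng v
  obtain ⟨γ, hγ, hpγ⟩ := hsurj (show lam ∈ {q | Λ.rng q = F.vmap v} from h.symm)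
  refine ⟨γ, ⟨hγ, hpγ⟩, ?_⟩
  rintro γ' ⟨h1, h2⟩
  exact hinj h1 hγ (by rw [h2, hpγ])

open Classical in
noncomputable def covLift (v : OΓ) (lam : PΛ) : PΓ :=
  if h : F.vmap v = Λ.rng lam then (covering_uniq_lift F hF v lam h).choose
  else Γ.ident v

lemma covLift_spec (v : OΓ) (lam : PΛ) (h : F.vmap v = Λ.rng lam) :
    Γ.rng (covLift F hF v lam) = v ∧ F.pmap (covLift F hF v lam) = lam := by
  rw [covLift, dif_pos h]
  exact (covering_uniq_lift F hF v lam h).choose_spec.1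

lemma covLift_eq (v : OΓ) (lam : PΛ) (h : F.vmap v = Λ.rng lam)
    (γ : PΓ) (h1 : Γ.rng γ = v) (h2 : F.pmap γ = lam) :
    covLift F hF v lam = γ := by
  have hu := covering_uniq_lift F hF v lam h
  rw [covLift, dif_pos h]
  exact (hu.unique hu.choose_spec.1 ⟨h1, h2⟩).symm.symm

end Aux

/-- if `p : Γ → Λ` is a covering of k-graphs, then `Xₚ := Γ⁰`
with `r = id`, `s = p`, and `φ(r(γ), p(γ)) = (γ, s(γ))` (where `γ` is the
unique lift of `p(γ)` with range `r(γ)`) is a well-defined `(Γ,Λ)` k-morph.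
Here `φ` is characterised by: `φ(v, λ) = (γ, s(γ))` where `γ` is the unique
path with `p(γ) = λ` and `r(γ) = v`. -/
theorem reverseCoveringMorph_exists {k : ℕ} {OΓ PΓ OΛ PΛ : Type}
    {Γ : KGraphStr k OΓ PΓ} {Λ : KGraphStr k OΛ PΛ}
    (F : KGraphHom Γ Λ) (hF : IsCovering F) :
    ∃ M : KMorph Γ Λ OΓ,
      (∀ v, M.r v = v) ∧ (∀ v, M.s v = F.vmap v) ∧
      (∀ v lam, M.s v = Λ.rng lam →
        F.pmap (M.φl v lam) = lam ∧ Γ.rng (M.φl v lam) = v ∧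
        M.φx v lam = Γ.src (M.φl v lam)) := by
  classical
  have hident_inj : Function.Injective Γ.ident := by
    intro a b hab
    have := congrArg Γ.rng hab
    rwa [Γ.rng_ident, Γ.rng_ident] at this
  have hcount : Countable OΓ := by
    have := Γ.countable
    exact Function.Injective.countable hident_inj
  have lift_comp : ∀ (v : OΓ) (lam : PΛ), F.vmap v = Λ.rng lam →
      F.vmap (Γ.src (covLift F hF v lam)) = Λ.src lam := by
    intro v lam h
    obtain ⟨h1, h2⟩ := covLift_spec F hF v lam h
    rw [← F.src_pmap, h2]
  refine ⟨{ countable := hcount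
            r := id
            s := F.vmap
            φl := covLift F hF
            φx := fun v lam => Γ.src (covLift F hF v lam)
            src_φl := fun x γ h => rfl
            d_φl := ?_
            s_φx := ?_
            rng_φl := ?_
            mult_φl := ?_
            mult_φx := ?_
            bij := ?_ }, fun v => rfl, fun v => rfl, ?_⟩
  · intro v lam h
    obtain ⟨h1, h2⟩ := covLift_spec F hF v lam h
    rw [← F.d_pmap, h2]
  · exact lift_comp
  · intro v lam h
    exact (covLift_spec F hF v lam h).1
  · intro v lam1 lam2 h h12
    obtain ⟨h1, h2⟩ := covLift_spec F hF v lam1 h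
    have h' : F.vmap (Γ.src (covLift F hF v lam1)) = Λ.rng lam2 := by
      rw [lift_comp v lam1 h, h12]
    obtain ⟨h1', h2'⟩ := covLift_spec F hF _ lam2 h'
    have hcomp : Γ.src (covLift F hF v lam1) = Γ.rng (covLift F hF _ lam2) := h1'.symm
    refine covLift_eq F hF v (Λ.comp lam1 lam2) (by rw [Λ.rng_comp lam1 lam2 h12]; exact h) _ ?_ ?_
    · rw [Γ.rng_comp _ _ hcomp, h1]
    · rw [F.comp_pmap _ _ hcomp, h2, h2']
  · intro v lam1 lam2 h h12
    obtain ⟨h1, h2⟩ := covLift_spec F hF v lam1 h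
    have h' : F.vmap (Γ.src (covLift F hF v lam1)) = Λ.rng lam2 := by
      rw [lift_comp v lam1 h, h12]
    obtain ⟨h1', h2'⟩ := covLift_spec F hF _ lam2 h'
    have hcomp : Γ.src (covLift F hF v lam1) = Γ.rng (covLift F hF _ lam2) := h1'.symm
    have : covLift F hF v (Λ.comp lam1 lam2) =
        Γ.comp (covLift F hF v lam1) (covLift F hF (Γ.src (covLift F hF v lam1)) lam2) := by
      refine covLift_eq F hF v (Λ.comp lam1 lam2) (by rw [Λ.rng_comp lam1 lam2 h12]; exact h) _ ?_ ?_
      · rw [Γ.rng_comp _ _ hcomp, h1]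
      · rw [F.comp_pmap _ _ hcomp, h2, h2']
    show Γ.src (covLift F hF v (Λ.comp lam1 lam2)) =
        Γ.src (covLift F hF (Γ.src (covLift F hF v lam1)) lam2)
    rw [this, Γ.src_comp _ _ hcomp]
  · intro gam x' hgx
    have hc : F.vmap (Γ.rng gam) = Λ.rng (F.pmap gam) := (F.rng_pmap gam).symm
    have hlift : covLift F hF (Γ.rng gam) (F.pmap gam) = gam :=
      covLift_eq F hF _ _ hc gam rfl rfl
    refine ⟨(Γ.rng gam, F.pmap gam), ⟨hc, hlift, show Γ.src (covLift F hF (Γ.rng gam) (F.pmap gam)) = x' by rw [hlift]; exact hgx⟩, ?_⟩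
    rintro ⟨v, lam⟩ ⟨hc', hl', hx'⟩
    obtain ⟨h1, h2⟩ := covLift_spec F hF v lam hc'
    simp only [Prod.mk.injEq]
    constructor
    · rw [← h1, hl']
    · rw [← h2, hl']
  · intro v lam h
    obtain ⟨h1, h2⟩ := covLift_spec F hF v lam h
    exact ⟨h2, h1, rfl⟩
end

section
/- There is a category M_k whose objects are k-graphs, whose morphisms from Γ to Λ are isomorphism classes of (Λ,Γ) k-morphs, whose identity at Λ is the class of the identity endomorph I_Λ, and whose composition is ([X₁],[X₂]) ↦ [X₁ *_{Λ₁⁰} X₂]. That is: composition is well-defined on isomorphism classes, associative, and the classes [I_Λ] are two-sided identities. -/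
section Aux
variable {k : ℕ}

/-- The identity endomorph on `Λ`. -/
def idMorph {O P : Type} (Λ : KGraphStr k O P) : KMorph Λ Λ O where
  countable := by
    haveI := Λ.countable
    have hinj : Function.Injective Λ.ident := fun a b h => by
      rw [← Λ.src_ident a, h, Λ.src_ident]
    exact hinj.countable
  r := id
  s := id
  φl _ lam := lam
  φx _ lam := Λ.src lam
  src_φl _ _ _ := rfl
  d_φl _ _ _ := rfl
  s_φx _ _ _ := rfl
  rng_φl _ _ h := h.symm
  mult_φl x γ₁ γ₂ _ _ := rfl
  mult_φx x γ₁ γ₂ h₁ h₂ := Λ.src_comp γ₁ γ₂ h₂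
  bij lam x' h := by
    refine ⟨(Λ.rng lam, lam), ⟨rfl, rfl, h⟩, ?_⟩
    rintro ⟨v, γ⟩ ⟨h1, h2, h3⟩
    simp only [id] at h1 h2 h3 ⊢
    subst h2; exact Prod.ext h1 rfl

theorem idMorph_is {O P : Type} (Λ : KGraphStr k O P) : IsIdMorph (idMorph Λ) :=
  ⟨fun _ => rfl, fun _ => rfl, fun _ _ _ => ⟨rfl, rfl⟩⟩

end Aux
section Aux2
variable {k : ℕ} {O₀ P₀ O₁ P₁ O₂ P₂ X₁ X₂ : Type}
  {Λ₀ : KGraphStr k O₀ P₀} {Λ₁ : KGraphStr k O₁ P₁} {Λ₂ : KGraphStr k O₂ P₂}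

theorem FibCarrier.ext {M₁ : KMorph Λ₀ Λ₁ X₁} {M₂ : KMorph Λ₁ Λ₂ X₂}
    {p q : FibCarrier M₁ M₂} (h1 : p.1.1 = q.1.1) (h2 : p.1.2 = q.1.2) : p = q :=
  Subtype.ext (Prod.ext h1 h2)

open Classical in
/-- The fibred product k-morph. -/
noncomputable def fibProd (M₁ : KMorph Λ₀ Λ₁ X₁) (M₂ : KMorph Λ₁ Λ₂ X₂) :
    KMorph Λ₀ Λ₂ (FibCarrier M₁ M₂) where
  countable := by
    haveI := M₁.countable; haveI := M₂.countable
    exact Subtype.countable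
  r p := M₁.r p.1.1
  s p := M₂.s p.1.2
  φl p lam := M₁.φl p.1.1 (M₂.φl p.1.2 lam)
  φx p lam :=
    if h : M₂.s p.1.2 = Λ₂.rng lam then
      ⟨(M₁.φx p.1.1 (M₂.φl p.1.2 lam), M₂.φx p.1.2 lam), by
        rw [M₁.s_φx _ _ (p.2.trans ((M₂.rng_φl _ _ h).symm)),
          M₂.src_φl _ _ h]⟩
    else p
  src_φl p lam h := by
    beta_reduce at h ⊢
    erw [dif_pos h]
    exact M₁.src_φl _ _ (p.2.trans ((M₂.rng_φl _ _ h).symm))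
  d_φl p lam h := by
    beta_reduce at h ⊢
    rw [M₁.d_φl _ _ (p.2.trans ((M₂.rng_φl _ _ h).symm)), M₂.d_φl _ _ h]
  s_φx p lam h := by
    beta_reduce at h ⊢
    erw [dif_pos h]; exact M₂.s_φx _ _ h
  rng_φl p lam h :=
    (M₁.rng_φl _ _ (p.2.trans ((M₂.rng_φl _ _ h).symm)))
  mult_φl p lam₁ lam₂ h₁ h₂ := by
    beta_reduce at h₁ ⊢
    have hx2 : M₂.s (M₂.φx p.1.2 lam₁) = Λ₂.rng lam₂ := by
      rw [M₂.s_φx _ _ h₁]; exact h₂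
    have hc1 : M₁.s p.1.1 = Λ₁.rng (M₂.φl p.1.2 lam₁) :=
      p.2.trans ((M₂.rng_φl _ _ h₁).symm)
    have hc2 : Λ₁.src (M₂.φl p.1.2 lam₁) = Λ₁.rng (M₂.φl (M₂.φx p.1.2 lam₁) lam₂) := by
      rw [M₂.src_φl _ _ h₁, M₂.rng_φl _ _ hx2]
    rw [M₂.mult_φl _ _ _ h₁ h₂, M₁.mult_φl _ _ _ hc1 hc2]
    erw [dif_pos h₁]
  mult_φx p lam₁ lam₂ h₁ h₂ := by
    beta_reduce at h₁ ⊢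
    have hx2 : M₂.s (M₂.φx p.1.2 lam₁) = Λ₂.rng lam₂ := by
      rw [M₂.s_φx _ _ h₁]; exact h₂
    have hc : M₂.s p.1.2 = Λ₂.rng (Λ₂.comp lam₁ lam₂) := by
      rw [Λ₂.rng_comp _ _ h₂]; exact h₁
    have hc1 : M₁.s p.1.1 = Λ₁.rng (M₂.φl p.1.2 lam₁) :=
      p.2.trans ((M₂.rng_φl _ _ h₁).symm)
    have hc2 : Λ₁.src (M₂.φl p.1.2 lam₁) = Λ₁.rng (M₂.φl (M₂.φx p.1.2 lam₁) lam₂) := by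
      rw [M₂.src_φl _ _ h₁, M₂.rng_φl _ _ hx2]
    erw [dif_pos hc, dif_pos h₁]
    apply FibCarrier.ext
    · show M₁.φx p.1.1 (M₂.φl p.1.2 (Λ₂.comp lam₁ lam₂)) = _
      erw [dif_pos hx2]
      show _ = M₁.φx (M₁.φx p.1.1 (M₂.φl p.1.2 lam₁)) (M₂.φl (M₂.φx p.1.2 lam₁) lam₂)
      rw [M₂.mult_φl _ _ _ h₁ h₂, M₁.mult_φx _ _ _ hc1 hc2]
    · show M₂.φx p.1.2 (Λ₂.comp lam₁ lam₂) = _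
      erw [dif_pos hx2]
      show _ = M₂.φx (M₂.φx p.1.2 lam₁) lam₂
      rw [M₂.mult_φx _ _ _ h₁ h₂]
  bij lam x' h := by
    beta_reduce at h ⊢
    obtain ⟨⟨y₁, γ⟩, ⟨hy1, hy2, hy3⟩, huniq1⟩ := M₁.bij lam x'.1.1 h
    have hsγ : Λ₁.src γ = M₂.r x'.1.2 := by
      rw [← x'.2, ← hy3, M₁.s_φx _ _ hy1]
    obtain ⟨⟨y₂, mu⟩, ⟨hz1, hz2, hz3⟩, huniq2⟩ := M₂.bij γ x'.1.2 hsγ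
    have hcar : M₁.s y₁ = M₂.r y₂ := by
      rw [hy1, ← hz2, M₂.rng_φl _ _ hz1]
    refine ⟨(⟨(y₁, y₂), hcar⟩, mu), ⟨hz1, ?_, ?_⟩, ?_⟩
    · show M₁.φl y₁ (M₂.φl y₂ mu) = lam
      rw [hz2, hy2]
    · show (if _ : M₂.s y₂ = Λ₂.rng mu then _ else _ : FibCarrier M₁ M₂) = x'
      erw [dif_pos hz1]
      apply FibCarrier.ext
      · show M₁.φx y₁ (M₂.φl y₂ mu) = x'.1.1
        rw [hz2, hy3]
      · exact hz3
    · rintro ⟨⟨⟨z₁, z₂⟩, hz⟩, mu'⟩ ⟨c1, c2, c3⟩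
      dsimp only at c1 c2 c3 ⊢
      erw [dif_pos c1] at c3
      have e1 : (z₁, M₂.φl z₂ mu') = (y₁, γ) := by
        apply huniq1
        refine ⟨hz.trans ((M₂.rng_φl _ _ c1).symm), c2, ?_⟩
        exact congrArg (fun t => t.1.1) c3
      have e2 : (z₂, mu') = (y₂, mu) := by
        apply huniq2
        refine ⟨c1, (Prod.ext_iff.mp e1).2, ?_⟩
        exact congrArg (fun t => t.1.2) c3
      obtain ⟨e11, e12⟩ := Prod.ext_iff.mp e1
      obtain ⟨e21, e22⟩ := Prod.ext_iff.mp e2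
      exact Prod.ext (FibCarrier.ext e11 e21) e22

theorem fibProd_is (M₁ : KMorph Λ₀ Λ₁ X₁) (M₂ : KMorph Λ₁ Λ₂ X₂) :
    IsFibProd M₁ M₂ (fibProd M₁ M₂) := by
  refine ⟨fun _ => rfl, fun _ => rfl, fun p lam h => ⟨rfl, ?_, ?_⟩⟩ <;>
  · simp only [fibProd]
    erw [dif_pos (show M₂.s p.1.2 = Λ₂.rng lam from h)]
end Aux2
section Aux3
variable {k : ℕ} {O₀ P₀ O₁ P₁ O₂ P₂ X₁ X₂ Y₁ Y₂ : Type}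
  {Λ₀ : KGraphStr k O₀ P₀} {Λ₁ : KGraphStr k O₁ P₁} {Λ₂ : KGraphStr k O₂ P₂}

/-- The equivalence of carriers induced by isos of factors. -/
def fibEquiv {M₁ : KMorph Λ₀ Λ₁ X₁} {M₂ : KMorph Λ₁ Λ₂ X₂}
    {N₁ : KMorph Λ₀ Λ₁ Y₁} {N₂ : KMorph Λ₁ Λ₂ Y₂}
    (i₁ : MorphIso M₁ N₁) (i₂ : MorphIso M₂ N₂) :
    FibCarrier M₁ M₂ ≃ FibCarrier N₁ N₂ where
  toFun p := ⟨(i₁.θ p.1.1, i₂.θ p.1.2), by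
    show N₁.s (i₁.θ p.1.1) = N₂.r (i₂.θ p.1.2)
    rw [i₁.s_θ, i₂.r_θ]; exact p.2⟩
  invFun q := ⟨(i₁.θ.symm q.1.1, i₂.θ.symm q.1.2), by
    show M₁.s (i₁.θ.symm q.1.1) = M₂.r (i₂.θ.symm q.1.2)
    have h1 : M₁.s (i₁.θ.symm q.1.1) = N₁.s q.1.1 := by
      conv_rhs => rw [← i₁.θ.apply_symm_apply q.1.1, i₁.s_θ]
    have h2 : M₂.r (i₂.θ.symm q.1.2) = N₂.r q.1.2 := by
      conv_rhs => rw [← i₂.θ.apply_symm_apply q.1.2, i₂.r_θ]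
    rw [h1, h2]; exact q.2⟩
  left_inv p := FibCarrier.ext (by simp) (by simp)
  right_inv q := FibCarrier.ext (by simp) (by simp)

theorem fibEquiv_fst {M₁ : KMorph Λ₀ Λ₁ X₁} {M₂ : KMorph Λ₁ Λ₂ X₂}
    {N₁ : KMorph Λ₀ Λ₁ Y₁} {N₂ : KMorph Λ₁ Λ₂ Y₂}
    (i₁ : MorphIso M₁ N₁) (i₂ : MorphIso M₂ N₂) (p : FibCarrier M₁ M₂) :
    (fibEquiv i₁ i₂ p).1.1 = i₁.θ p.1.1 := rfl

theorem fibEquiv_snd {M₁ : KMorph Λ₀ Λ₁ X₁} {M₂ : KMorph Λ₁ Λ₂ X₂}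
    {N₁ : KMorph Λ₀ Λ₁ Y₁} {N₂ : KMorph Λ₁ Λ₂ Y₂}
    (i₁ : MorphIso M₁ N₁) (i₂ : MorphIso M₂ N₂) (p : FibCarrier M₁ M₂) :
    (fibEquiv i₁ i₂ p).1.2 = i₂.θ p.1.2 := rfl

/-- Well-definedness of the fibred product on isomorphism classes. -/
def fibIsoOfIsos {M₁ : KMorph Λ₀ Λ₁ X₁} {M₂ : KMorph Λ₁ Λ₂ X₂}
    {N₁ : KMorph Λ₀ Λ₁ Y₁} {N₂ : KMorph Λ₁ Λ₂ Y₂}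
    {P : KMorph Λ₀ Λ₂ (FibCarrier M₁ M₂)} {Q : KMorph Λ₀ Λ₂ (FibCarrier N₁ N₂)}
    (hP : IsFibProd M₁ M₂ P) (hQ : IsFibProd N₁ N₂ Q)
    (i₁ : MorphIso M₁ N₁) (i₂ : MorphIso M₂ N₂) : MorphIso P Q where
  θ := fibEquiv i₁ i₂
  r_θ p := by rw [hQ.1, hP.1, fibEquiv_fst, i₁.r_θ]
  s_θ p := by rw [hQ.2.1, hP.2.1, fibEquiv_snd, i₂.s_θ]
  φl_θ p lam h := by
    have h' : M₂.s p.1.2 = Λ₂.rng lam := (hP.2.1 p) ▸ h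
    have hQs : Q.s (fibEquiv i₁ i₂ p) = Λ₂.rng lam := by
      rw [hQ.2.1, fibEquiv_snd, i₂.s_θ]; exact h'
    have hside : M₁.s p.1.1 = Λ₁.rng (M₂.φl p.1.2 lam) :=
      p.2.trans ((M₂.rng_φl _ _ h').symm)
    rw [(hQ.2.2 _ lam hQs).1, (hP.2.2 p lam h).1, fibEquiv_fst, fibEquiv_snd,
      i₂.φl_θ _ _ h', i₁.φl_θ _ _ hside]
  φx_θ p lam h := by
    have h' : M₂.s p.1.2 = Λ₂.rng lam := (hP.2.1 p) ▸ h
    have hQs : Q.s (fibEquiv i₁ i₂ p) = Λ₂.rng lam := by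
      rw [hQ.2.1, fibEquiv_snd, i₂.s_θ]; exact h'
    have hside : M₁.s p.1.1 = Λ₁.rng (M₂.φl p.1.2 lam) :=
      p.2.trans ((M₂.rng_φl _ _ h').symm)
    obtain ⟨_, qc1, qc2⟩ := hQ.2.2 _ lam hQs
    obtain ⟨_, pc1, pc2⟩ := hP.2.2 p lam h
    apply FibCarrier.ext
    · rw [qc1, fibEquiv_fst, fibEquiv_snd, fibEquiv_fst,
        i₂.φl_θ _ _ h', i₁.φx_θ _ _ hside, pc1]
    · rw [qc2, fibEquiv_snd, fibEquiv_snd, i₂.φx_θ _ _ h', pc2]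

end Aux3
section Aux4
variable {k : ℕ} {O₀ P₀ O₁ P₁ O₂ P₂ O₃ P₃ X₁ X₂ X₃ : Type}
  {Λ₀ : KGraphStr k O₀ P₀} {Λ₁ : KGraphStr k O₁ P₁}
  {Λ₂ : KGraphStr k O₂ P₂} {Λ₃ : KGraphStr k O₃ P₃}
  {M₁ : KMorph Λ₀ Λ₁ X₁} {M₂ : KMorph Λ₁ Λ₂ X₂} {M₃ : KMorph Λ₂ Λ₃ X₃}

/-- The associativity equivalence of carriers. -/
def assocEquiv {P₁₂ : KMorph Λ₀ Λ₂ (FibCarrier M₁ M₂)}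
    {P₂₃ : KMorph Λ₁ Λ₃ (FibCarrier M₂ M₃)}
    (h12 : IsFibProd M₁ M₂ P₁₂) (h23 : IsFibProd M₂ M₃ P₂₃) :
    FibCarrier P₁₂ M₃ ≃ FibCarrier M₁ P₂₃ where
  toFun p :=
    ⟨(p.1.1.1.1, ⟨(p.1.1.1.2, p.1.2), (h12.2.1 p.1.1) ▸ p.2⟩),
      by rw [h23.1]; exact p.1.1.2⟩
  invFun q :=
    ⟨(⟨(q.1.1, q.1.2.1.1), q.2.trans (h23.1 q.1.2)⟩, q.1.2.1.2),
      (h12.2.1 _).trans q.1.2.2⟩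
  left_inv p := FibCarrier.ext (FibCarrier.ext rfl rfl) rfl
  right_inv q := FibCarrier.ext rfl (FibCarrier.ext rfl rfl)

variable {P₁₂ : KMorph Λ₀ Λ₂ (FibCarrier M₁ M₂)}
  {P₂₃ : KMorph Λ₁ Λ₃ (FibCarrier M₂ M₃)}
  (h12 : IsFibProd M₁ M₂ P₁₂) (h23 : IsFibProd M₂ M₃ P₂₃)

theorem assocEquiv_11 (p : FibCarrier P₁₂ M₃) :
    (assocEquiv h12 h23 p).1.1 = p.1.1.1.1 := rfl
theorem assocEquiv_211 (p : FibCarrier P₁₂ M₃) :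
    (assocEquiv h12 h23 p).1.2.1.1 = p.1.1.1.2 := rfl
theorem assocEquiv_212 (p : FibCarrier P₁₂ M₃) :
    (assocEquiv h12 h23 p).1.2.1.2 = p.1.2 := rfl

/-- Associativity of the fibred product up to isomorphism. -/
def fibAssocIso
    {L : KMorph Λ₀ Λ₃ (FibCarrier P₁₂ M₃)} {R : KMorph Λ₀ Λ₃ (FibCarrier M₁ P₂₃)}
    (hL : IsFibProd P₁₂ M₃ L) (hR : IsFibProd M₁ P₂₃ R) : MorphIso L R where
  θ := assocEquiv h12 h23
  r_θ p := by
    rw [hR.1, hL.1, h12.1, assocEquiv_11]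
  s_θ p := by
    rw [hR.2.1, hL.2.1, h23.2.1, assocEquiv_212]
  φl_θ p lam h := by
    have h3 : M₃.s p.1.2 = Λ₃.rng lam := (hL.2.1 p) ▸ h
    have hq23 : P₂₃.s (assocEquiv h12 h23 p).1.2 = Λ₃.rng lam := by
      rw [h23.2.1, assocEquiv_212]; exact h3
    have hRs : R.s (assocEquiv h12 h23 p) = Λ₃.rng lam :=
      (hR.2.1 _).trans hq23
    have h12side : P₁₂.s p.1.1 = Λ₂.rng (M₃.φl p.1.2 lam) := by
      rw [h12.2.1, M₃.rng_φl _ _ h3]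
      exact (h12.2.1 p.1.1) ▸ p.2
    rw [(hR.2.2 _ lam hRs).1, (hL.2.2 p lam h).1,
      (h23.2.2 _ lam hq23).1, (h12.2.2 p.1.1 _ h12side).1,
      assocEquiv_11, assocEquiv_211, assocEquiv_212]
  φx_θ p lam h := by
    have h3 : M₃.s p.1.2 = Λ₃.rng lam := (hL.2.1 p) ▸ h
    have hq23 : P₂₃.s (assocEquiv h12 h23 p).1.2 = Λ₃.rng lam := by
      rw [h23.2.1, assocEquiv_212]; exact h3
    have hRs : R.s (assocEquiv h12 h23 p) = Λ₃.rng lam :=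
      (hR.2.1 _).trans hq23
    have h12side : P₁₂.s p.1.1 = Λ₂.rng (M₃.φl p.1.2 lam) := by
      rw [h12.2.1, M₃.rng_φl _ _ h3]
      exact (h12.2.1 p.1.1) ▸ p.2
    obtain ⟨_, rc1, rc2⟩ := hR.2.2 _ lam hRs
    obtain ⟨_, lc1, lc2⟩ := hL.2.2 p lam h
    obtain ⟨qc0, qc1, qc2⟩ := h23.2.2 _ lam hq23
    obtain ⟨pc0, pc1, pc2⟩ := h12.2.2 p.1.1 _ h12side
    apply FibCarrier.ext
    · rw [rc1, assocEquiv_11 h12 h23 (L.φx p lam)]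
      rw [qc0, assocEquiv_11, assocEquiv_211, assocEquiv_212, lc1, pc1]
    · apply FibCarrier.ext
      · rw [rc2, qc1, assocEquiv_211 h12 h23 p, assocEquiv_212 h12 h23 p,
          assocEquiv_211 h12 h23 (L.φx p lam), lc1, pc2]
      · rw [rc2, qc2, assocEquiv_212 h12 h23 p,
          assocEquiv_212 h12 h23 (L.φx p lam), lc2]

end Aux4
section Aux5
variable {k : ℕ} {OΛ PΛ OΓ PΓ X : Type}
  {Λ : KGraphStr k OΛ PΛ} {Γ : KGraphStr k OΓ PΓ}

/-- Left unit law. -/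
def leftUnitIso {M : KMorph Λ Γ X} {I : KMorph Λ Λ OΛ}
    {P : KMorph Λ Γ (FibCarrier I M)}
    (hI : IsIdMorph I) (hP : IsFibProd I M P) : MorphIso P M where
  θ := {
    toFun := fun p => p.1.2
    invFun := fun x => ⟨(M.r x, x), (hI.2.1 _)⟩
    left_inv := fun p => FibCarrier.ext
      (show M.r p.1.2 = p.1.1 from ((hI.2.1 p.1.1).symm.trans p.2).symm) rfl
    right_inv := fun _ => rfl }
  r_θ p := by
    rw [hP.1]
    show M.r p.1.2 = I.r p.1.1
    rw [hI.1]
    exact ((hI.2.1 p.1.1).symm.trans p.2).symm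
  s_θ p := by rw [hP.2.1]; rfl
  φl_θ p γ h := by
    have hM : M.s p.1.2 = Γ.rng γ := (hP.2.1 p) ▸ h
    have e : p.1.1 = M.r p.1.2 := (hI.2.1 p.1.1).symm.trans p.2
    have hside : I.s p.1.1 = Λ.rng (M.φl p.1.2 γ) := by
      rw [hI.2.1, e, ← M.rng_φl _ _ hM]
    rw [(hP.2.2 p γ h).1, (hI.2.2 p.1.1 _ hside).1]; rfl
  φx_θ p γ h := by
    have hM : M.s p.1.2 = Γ.rng γ := (hP.2.1 p) ▸ h
    exact ((hP.2.2 p γ h).2.2).symm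

/-- Right unit law. -/
def rightUnitIso {M : KMorph Λ Γ X} {J : KMorph Γ Γ OΓ}
    {Q : KMorph Λ Γ (FibCarrier M J)}
    (hJ : IsIdMorph J) (hQ : IsFibProd M J Q) : MorphIso Q M where
  θ := {
    toFun := fun p => p.1.1
    invFun := fun x => ⟨(x, M.s x), (hJ.1 _).symm⟩
    left_inv := fun p => FibCarrier.ext rfl (p.2.trans (hJ.1 _))
    right_inv := fun _ => rfl }
  r_θ p := by rw [hQ.1]; rfl
  s_θ p := by
    rw [hQ.2.1, hJ.2.1, ← (p.2.trans (hJ.1 p.1.2))]; rfl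
  φl_θ p γ h := by
    have hw : J.s p.1.2 = Γ.rng γ := (hQ.2.1 p) ▸ h
    rw [(hQ.2.2 p γ h).1, (hJ.2.2 p.1.2 γ hw).1]; rfl
  φx_θ p γ h := by
    have hw : J.s p.1.2 = Γ.rng γ := (hQ.2.1 p) ▸ h
    show M.φx p.1.1 γ = (Q.φx p γ).1.1
    rw [(hQ.2.2 p γ h).2.1, (hJ.2.2 p.1.2 γ hw).1]

end Aux5
/-- there is a category `M_k` whose objects are k-graphs and
whose morphisms from `Γ` to `Λ` are isomorphism classes of `(Λ,Γ)` k-morphs,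
with identities the classes `[I_Λ]` and composition
`([X₁],[X₂]) ↦ [X₁ *_{Λ₁⁰} X₂]`.  Concretely: identity endomorphs and fibred
products exist, the fibred product is well defined on isomorphism classes and
associative up to isomorphism, and identity endomorphs are two-sided units up
to isomorphism. -/
theorem morphCategory (k : ℕ) :
    -- identity morphisms exist
    (∀ (O P : Type) (Λ : KGraphStr k O P), ∃ I : KMorph Λ Λ O, IsIdMorph I) ∧
    -- composition (fibred product) exists
    (∀ (O₀ P₀ O₁ P₁ O₂ P₂ X₁ X₂ : Type)
       (Λ₀ : KGraphStr k O₀ P₀) (Λ₁ : KGraphStr k O₁ P₁) (Λ₂ : KGraphStr k O₂ P₂)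
       (M₁ : KMorph Λ₀ Λ₁ X₁) (M₂ : KMorph Λ₁ Λ₂ X₂),
       ∃ P : KMorph Λ₀ Λ₂ (FibCarrier M₁ M₂), IsFibProd M₁ M₂ P) ∧
    -- composition is well defined on isomorphism classes
    (∀ (O₀ P₀ O₁ P₁ O₂ P₂ X₁ X₂ Y₁ Y₂ : Type)
       (Λ₀ : KGraphStr k O₀ P₀) (Λ₁ : KGraphStr k O₁ P₁) (Λ₂ : KGraphStr k O₂ P₂)
       (M₁ : KMorph Λ₀ Λ₁ X₁) (M₂ : KMorph Λ₁ Λ₂ X₂)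
       (N₁ : KMorph Λ₀ Λ₁ Y₁) (N₂ : KMorph Λ₁ Λ₂ Y₂)
       (P : KMorph Λ₀ Λ₂ (FibCarrier M₁ M₂)) (Q : KMorph Λ₀ Λ₂ (FibCarrier N₁ N₂)),
       IsFibProd M₁ M₂ P → IsFibProd N₁ N₂ Q →
       Nonempty (MorphIso M₁ N₁) → Nonempty (MorphIso M₂ N₂) →
       Nonempty (MorphIso P Q)) ∧
    -- composition is associative up to isomorphism
    (∀ (O₀ P₀ O₁ P₁ O₂ P₂ O₃ P₃ X₁ X₂ X₃ : Type)
       (Λ₀ : KGraphStr k O₀ P₀) (Λ₁ : KGraphStr k O₁ P₁)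
       (Λ₂ : KGraphStr k O₂ P₂) (Λ₃ : KGraphStr k O₃ P₃)
       (M₁ : KMorph Λ₀ Λ₁ X₁) (M₂ : KMorph Λ₁ Λ₂ X₂) (M₃ : KMorph Λ₂ Λ₃ X₃)
       (P₁₂ : KMorph Λ₀ Λ₂ (FibCarrier M₁ M₂)) (P₂₃ : KMorph Λ₁ Λ₃ (FibCarrier M₂ M₃))
       (L : KMorph Λ₀ Λ₃ (FibCarrier P₁₂ M₃)) (R : KMorph Λ₀ Λ₃ (FibCarrier M₁ P₂₃)),
       IsFibProd M₁ M₂ P₁₂ → IsFibProd M₂ M₃ P₂₃ →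
       IsFibProd P₁₂ M₃ L → IsFibProd M₁ P₂₃ R →
       Nonempty (MorphIso L R)) ∧
    -- identity endomorphs are left units
    (∀ (OΛ PΛ OΓ PΓ X : Type)
       (Λ : KGraphStr k OΛ PΛ) (Γ : KGraphStr k OΓ PΓ)
       (M : KMorph Λ Γ X) (I : KMorph Λ Λ OΛ)
       (P : KMorph Λ Γ (FibCarrier I M)),
       IsIdMorph I → IsFibProd I M P → Nonempty (MorphIso P M)) ∧
    -- identity endomorphs are right units
    (∀ (OΛ PΛ OΓ PΓ X : Type)
       (Λ : KGraphStr k OΛ PΛ) (Γ : KGraphStr k OΓ PΓ)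
       (M : KMorph Λ Γ X) (J : KMorph Γ Γ OΓ)
       (Q : KMorph Λ Γ (FibCarrier M J)),
       IsIdMorph J → IsFibProd M J Q → Nonempty (MorphIso Q M)) := by
  refine ⟨?_, ?_, ?_, ?_, ?_, ?_⟩
  · intro O P Λ
    exact ⟨idMorph Λ, idMorph_is Λ⟩
  · intro _ _ _ _ _ _ _ _ _ _ _ M₁ M₂
    exact ⟨fibProd M₁ M₂, fibProd_is M₁ M₂⟩
  · intro _ _ _ _ _ _ _ _ _ _ _ _ _ _ _ _ _ P Q hP hQ h1 h2
    obtain ⟨i₁⟩ := h1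
    obtain ⟨i₂⟩ := h2
    exact ⟨fibIsoOfIsos hP hQ i₁ i₂⟩
  · intro _ _ _ _ _ _ _ _ _ _ _ _ _ _ _ _ _ _ _ _ _ _ h12 h23 hL hR
    exact ⟨fibAssocIso h12 h23 hL hR⟩
  · intro _ _ _ _ _ _ _ _ _ _ hI hP
    exact ⟨leftUnitIso hI hP⟩
  · intro _ _ _ _ _ _ _ _ _ _ hJ hQ
    exact ⟨rightUnitIso hJ hQ⟩
end

section
/- Let X be a (Λ,Γ) k-morph whose isomorphism class is invertible in the category M_k (i.e., there is a (Γ,Λ) k-morph Y with X *_{Γ⁰} Y ≅ I_Λ and Y *_{Λ⁰} X ≅ I_Γ). Then the range map r : X → Λ⁰ and the source map s : X → Γ⁰ are both bijections. -/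
/-- `M` is invertible in the category `M_k`: there is a k-morph `Y` in the
opposite direction such that both fibred products are isomorphic to the
respective identity endomorphs. -/
def MorphInvertible {k : ℕ} {OΛ PΛ OΓ PΓ X : Type}
    {Λ : KGraphStr k OΛ PΛ} {Γ : KGraphStr k OΓ PΓ}
    (M : KMorph Λ Γ X) : Prop :=
  ∃ (Y : Type) (N : KMorph Γ Λ Y)
    (P : KMorph Λ Λ (FibCarrier M N)) (Q : KMorph Γ Γ (FibCarrier N M))
    (I : KMorph Λ Λ OΛ) (J : KMorph Γ Γ OΓ),
    IsFibProd M N P ∧ IsFibProd N M Q ∧ IsIdMorph I ∧ IsIdMorph J ∧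
    Nonempty (MorphIso P I) ∧ Nonempty (MorphIso Q J)

/-- if a `(Λ,Γ)` k-morph `X` is invertible in `M_k`, then its
range map `r : X → Λ⁰` and source map `s : X → Γ⁰` are bijections. -/
theorem invertible_bijective {k : ℕ} {OΛ PΛ OΓ PΓ X : Type}
    {Λ : KGraphStr k OΛ PΛ} {Γ : KGraphStr k OΓ PΓ}
    (M : KMorph Λ Γ X) (hM : MorphInvertible M) :
    Function.Bijective M.r ∧ Function.Bijective M.s := by
  obtain ⟨Y, N, P, Q, I, J, hP, hQ, hI, hJ, ⟨ι⟩, ⟨κ⟩⟩ := hM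
  have hθ1 : ∀ p : FibCarrier M N, ι.θ p = M.r p.1.1 := fun p => by
    have h := ι.r_θ p; rw [hI.1] at h; rw [h, hP.1]
  have hθ2 : ∀ p : FibCarrier M N, ι.θ p = N.s p.1.2 := fun p => by
    have h := ι.s_θ p; rw [hI.2.1] at h; rw [h, hP.2.1]
  have hκ1 : ∀ q : FibCarrier N M, κ.θ q = N.r q.1.1 := fun q => by
    have h := κ.r_θ q; rw [hJ.1] at h; rw [h, hQ.1]
  have hκ2 : ∀ q : FibCarrier N M, κ.θ q = M.s q.1.2 := fun q => by
    have h := κ.s_θ q; rw [hJ.2.1] at h; rw [h, hQ.2.1]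
  have hrsurj : Function.Surjective M.r := fun v =>
    ⟨(ι.θ.symm v).1.1, by rw [← hθ1]; simp⟩
  have hNssurj : Function.Surjective N.s := fun v =>
    ⟨(ι.θ.symm v).1.2, by rw [← hθ2]; simp⟩
  have hssurj : Function.Surjective M.s := fun w =>
    ⟨(κ.θ.symm w).1.2, by rw [← hκ2]; simp⟩
  have hNrsurj : Function.Surjective N.r := fun w =>
    ⟨(κ.θ.symm w).1.1, by rw [← hκ1]; simp⟩
  refine ⟨⟨?_, hrsurj⟩, ⟨?_, hssurj⟩⟩
  · intro x₁ x₂ h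
    obtain ⟨y₁, hy₁⟩ := hNrsurj (M.s x₁)
    obtain ⟨y₂, hy₂⟩ := hNrsurj (M.s x₂)
    have e : ι.θ ⟨(x₁, y₁), hy₁.symm⟩ = ι.θ ⟨(x₂, y₂), hy₂.symm⟩ := by
      exact (hθ1 ⟨(x₁, y₁), hy₁.symm⟩).trans (h.trans (hθ1 ⟨(x₂, y₂), hy₂.symm⟩).symm)
    exact congrArg (fun p : FibCarrier M N => p.1.1) (ι.θ.injective e)
  · intro x₁ x₂ h
    obtain ⟨y₁, hy₁⟩ := hNssurj (M.r x₁)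
    obtain ⟨y₂, hy₂⟩ := hNssurj (M.r x₂)
    have e : κ.θ ⟨(y₁, x₁), hy₁⟩ = κ.θ ⟨(y₂, x₂), hy₂⟩ := by
      exact (hκ2 ⟨(y₁, x₁), hy₁⟩).trans (h.trans (hκ2 ⟨(y₂, x₂), hy₂⟩).symm)
    exact congrArg (fun q : FibCarrier N M => q.1.2) (κ.θ.injective e)
end

section
/- Let Λ, Γ be k-graphs and X a (Λ,Γ) k-morph. Define Σ = Λ ⊔ Γ ⊔ (Λ *_{Λ⁰} X) with degree d(σ)=(d(σ),0) on Λ⊔Γ and d(λ,x)=(d(λ),1) on Λ *_{Λ⁰} X, range and source inherited from Λ, Γ and r(λ,x)=r(λ), s(λ,x)=s(x), and composition: within Λ⊔Γ as given; μ·(ν,x)=(μν,x) for μ ∈ Λ; and (μ,x)·ν = (μν', x') for ν ∈ Γ where φ(x,ν)=(ν',x'). Then (Σ, d) is a (k+1)-graph (i.e., the degree map satisfies the factorisation property and composition is associative). -/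
namespace LinkAux

lemma deg_zero {k : ℕ} {O P : Type} (S : KGraphStr k O P) (p : P)
    (h : S.d p = 0) : p = S.ident (S.rng p) := by
  obtain ⟨u, -, huniq⟩ := S.factor p 0 0 (by rw [h]; simp)
  have h1 := huniq (S.ident (S.rng p), p)
    ⟨by rw [S.src_ident], S.d_ident _, h, S.ident_comp p⟩
  have h2 := huniq (p, S.ident (S.src p))
    ⟨(S.rng_ident _).symm, h, S.d_ident _, S.comp_ident p⟩
  exact (congrArg Prod.fst (h1.trans h2.symm)).symm

lemma snoc_add {k : ℕ} (f g : Fin k → ℕ) (a b : ℕ) :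
    (Fin.snoc f a + Fin.snoc g b : Fin (k+1) → ℕ) = Fin.snoc (f + g) (a + b) := by
  funext i
  refine Fin.lastCases ?_ (fun j => ?_) i
  · simp only [Pi.add_apply, Fin.snoc_last]
  · simp only [Pi.add_apply, Fin.snoc_castSucc]

variable {k : ℕ} {OΛ PΛ OΓ PΓ X : Type}
    {Λ : KGraphStr k OΛ PΛ} {Γ : KGraphStr k OΓ PΓ}
    (M : KMorph Λ Γ X)

lemma phil_ident (x : X) : M.φl x (Γ.ident (M.s x)) = Λ.ident (M.r x) := by
  have hc : M.s x = Γ.rng (Γ.ident (M.s x)) := (Γ.rng_ident _).symm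
  have hd : Λ.d (M.φl x (Γ.ident (M.s x))) = 0 := by
    rw [M.d_φl _ _ hc, Γ.d_ident]
  have := deg_zero Λ _ hd
  rw [this, M.rng_φl _ _ hc]

lemma phix_ident (x : X) : M.φx x (Γ.ident (M.s x)) = x := by
  have hc : M.s x = Γ.rng (Γ.ident (M.s x)) := (Γ.rng_ident _).symm
  have hee : Γ.comp (Γ.ident (M.s x)) (Γ.ident (M.s x)) = Γ.ident (M.s x) := by
    have h := Γ.comp_ident (Γ.ident (M.s x))
    rwa [Γ.src_ident] at h
  have hsx0 : M.s (M.φx x (Γ.ident (M.s x))) = M.s x := by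
    rw [M.s_φx _ _ hc, Γ.src_ident]
  have hfix : M.φx (M.φx x (Γ.ident (M.s x))) (Γ.ident (M.s x))
      = M.φx x (Γ.ident (M.s x)) := by
    have h := M.mult_φx x (Γ.ident (M.s x)) (Γ.ident (M.s x)) hc
      (by rw [Γ.src_ident, Γ.rng_ident])
    rw [hee] at h; exact h.symm
  have hrx0 : M.r (M.φx x (Γ.ident (M.s x))) = M.r x := by
    rw [← M.src_φl _ _ hc, phil_ident, Λ.src_ident]
  have hphlx0 : M.φl (M.φx x (Γ.ident (M.s x))) (Γ.ident (M.s x))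
      = Λ.ident (M.r x) := by
    have h := phil_ident M (M.φx x (Γ.ident (M.s x)))
    rw [hsx0] at h; rw [h, hrx0]
  obtain ⟨u, -, huniq⟩ := M.bij (Λ.ident (M.r x)) (M.φx x (Γ.ident (M.s x)))
    (by rw [Λ.src_ident, hrx0])
  have h1 := huniq (x, Γ.ident (M.s x)) ⟨hc, phil_ident M x, rfl⟩
  have h2 := huniq (M.φx x (Γ.ident (M.s x)), Γ.ident (M.s x))
    ⟨by rw [hsx0]; exact hc, hphlx0, hfix⟩
  exact (congrArg Prod.fst (h1.trans h2.symm)).symm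

/-- The path set of the linking (k+1)-graph. -/
abbrev LPath := (PΛ ⊕ PΓ) ⊕ {p : PΛ × X // Λ.src p.1 = M.r p.2}

def csrc : LPath M → OΛ ⊕ OΓ
  | .inl (.inl μ) => .inl (Λ.src μ)
  | .inl (.inr γ) => .inr (Γ.src γ)
  | .inr p => .inr (M.s p.1.2)

def crng : LPath M → OΛ ⊕ OΓ
  | .inl (.inl μ) => .inl (Λ.rng μ)
  | .inl (.inr γ) => .inr (Γ.rng γ)
  | .inr p => .inl (Λ.rng p.1.1)

def cident : OΛ ⊕ OΓ → LPath M
  | .inl v => .inl (.inl (Λ.ident v))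
  | .inr w => .inl (.inr (Γ.ident w))

def cd : LPath M → Fin (k + 1) → ℕ
  | .inl (.inl μ) => Fin.snoc (Λ.d μ) 0
  | .inl (.inr γ) => Fin.snoc (Γ.d γ) 0
  | .inr p => Fin.snoc (Λ.d p.1.1) 1

open Classical in
noncomputable def ccomp : LPath M → LPath M → LPath M
  | .inl (.inl μ), .inl (.inl ν) => .inl (.inl (Λ.comp μ ν))
  | .inl (.inr μ), .inl (.inr ν) => .inl (.inr (Γ.comp μ ν))
  | .inl (.inl μ), .inr p =>
      if h : Λ.src μ = Λ.rng p.1.1 then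
        .inr ⟨(Λ.comp μ p.1.1, p.1.2), by rw [Λ.src_comp _ _ h]; exact p.2⟩
      else .inl (.inl μ)
  | .inr p, .inl (.inr ν) =>
      if h : M.s p.1.2 = Γ.rng ν then
        .inr ⟨(Λ.comp p.1.1 (M.φl p.1.2 ν), M.φx p.1.2 ν), by
          have h1 : Λ.src p.1.1 = Λ.rng (M.φl p.1.2 ν) := by
            rw [M.rng_φl _ _ h]; exact p.2
          rw [Λ.src_comp _ _ h1, M.src_φl _ _ h]⟩
      else .inr p
  | .inl (.inl μ), .inl (.inr _) => .inl (.inl μ)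
  | .inl (.inr μ), .inl (.inl _) => .inl (.inr μ)
  | .inl (.inr μ), .inr _ => .inl (.inr μ)
  | .inr p, .inl (.inl _) => .inr p
  | .inr p, .inr _ => .inr p

lemma snoc_zero : (Fin.snoc (0 : Fin k → ℕ) 0 : Fin (k+1) → ℕ) = 0 := by
  funext i
  refine Fin.lastCases ?_ (fun j => ?_) i
  · simp
  · simp

lemma ccomp_lp (μ : PΛ) (p : {p : PΛ × X // Λ.src p.1 = M.r p.2})
    (h : Λ.src μ = Λ.rng p.1.1) (hz : Λ.src (Λ.comp μ p.1.1) = M.r p.1.2) :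
    ccomp M (.inl (.inl μ)) (.inr p) = .inr ⟨(Λ.comp μ p.1.1, p.1.2), hz⟩ := by
  simp only [ccomp, dif_pos h]

lemma ccomp_pg (p : {p : PΛ × X // Λ.src p.1 = M.r p.2}) (ν : PΓ)
    (h : M.s p.1.2 = Γ.rng ν)
    (hz : Λ.src (Λ.comp p.1.1 (M.φl p.1.2 ν)) = M.r (M.φx p.1.2 ν)) :
    ccomp M (.inr p) (.inl (.inr ν)) =
      .inr ⟨(Λ.comp p.1.1 (M.φl p.1.2 ν), M.φx p.1.2 ν), hz⟩ := by
  simp only [ccomp, dif_pos h]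

lemma hz_lp (μ : PΛ) (p : {p : PΛ × X // Λ.src p.1 = M.r p.2})
    (h : Λ.src μ = Λ.rng p.1.1) : Λ.src (Λ.comp μ p.1.1) = M.r p.1.2 := by
  rw [Λ.src_comp _ _ h]; exact p.2

lemma hz_pg (p : {p : PΛ × X // Λ.src p.1 = M.r p.2}) (ν : PΓ)
    (h : M.s p.1.2 = Γ.rng ν) :
    Λ.src (Λ.comp p.1.1 (M.φl p.1.2 ν)) = M.r (M.φx p.1.2 ν) := by
  have h1 : Λ.src p.1.1 = Λ.rng (M.φl p.1.2 ν) := by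
    rw [M.rng_φl _ _ h]; exact p.2
  rw [Λ.src_comp _ _ h1, M.src_φl _ _ h]

lemma link_assoc : ∀ p q r : LPath M, csrc M p = crng M q →
    csrc M q = crng M r →
    ccomp M (ccomp M p q) r = ccomp M p (ccomp M q r) := by
  rintro ((μ|μ)|p) ((ν|ν)|q) ((ρ|ρ)|w) hpq hqr <;>
    simp only [csrc, crng, Sum.inl.injEq, Sum.inr.injEq, reduceCtorEq]
      at hpq hqr
  · -- Λ Λ Λ
    simp only [ccomp]
    rw [Λ.comp_assoc _ _ _ hpq hqr]
  · -- Λ Λ (Λ,X)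
    have h1 : Λ.src (Λ.comp μ ν) = Λ.rng w.1.1 := by
      rw [Λ.src_comp _ _ hpq]; exact hqr
    have h2 : Λ.src μ = Λ.rng (Λ.comp ν w.1.1) := by
      rw [Λ.rng_comp _ _ hqr]; exact hpq
    rw [show ccomp M (.inl (.inl μ)) (.inl (.inl ν))
        = (.inl (.inl (Λ.comp μ ν)) : LPath M) from rfl]
    rw [ccomp_lp M ν w hqr (hz_lp M ν w hqr)]
    rw [ccomp_lp M (Λ.comp μ ν) w h1 (hz_lp M _ w h1)]
    rw [ccomp_lp M μ ⟨(Λ.comp ν w.1.1, w.1.2), hz_lp M ν w hqr⟩ h2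
      (hz_lp M μ _ h2)]
    congr 1
    exact Subtype.ext (Prod.ext (Λ.comp_assoc _ _ _ hpq hqr) rfl)
  · -- Λ (Λ,X) Γ
    have h1 : Λ.src q.1.1 = Λ.rng (M.φl q.1.2 ρ) := by
      rw [M.rng_φl _ _ hqr]; exact q.2
    have h2 : Λ.src μ = Λ.rng (Λ.comp q.1.1 (M.φl q.1.2 ρ)) := by
      rw [Λ.rng_comp _ _ h1]; exact hpq
    rw [ccomp_lp M μ q hpq (hz_lp M μ q hpq),
      ccomp_pg M q ρ hqr (hz_pg M q ρ hqr)]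
    rw [ccomp_pg M ⟨(Λ.comp μ q.1.1, q.1.2), hz_lp M μ q hpq⟩ ρ hqr
      (hz_pg M _ ρ hqr)]
    rw [ccomp_lp M μ
      ⟨(Λ.comp q.1.1 (M.φl q.1.2 ρ), M.φx q.1.2 ρ), hz_pg M q ρ hqr⟩ h2
      (hz_lp M μ _ h2)]
    congr 1
    exact Subtype.ext (Prod.ext (Λ.comp_assoc _ _ _ hpq h1) rfl)
  · -- Γ Γ Γ
    simp only [ccomp]
    rw [Γ.comp_assoc _ _ _ hpq hqr]
  · -- (Λ,X) Γ Γ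
    have hx1 : M.s (M.φx p.1.2 ν) = Γ.rng ρ := by
      rw [M.s_φx _ _ hpq]; exact hqr
    have hcn : M.s p.1.2 = Γ.rng (Γ.comp ν ρ) := by
      rw [Γ.rng_comp _ _ hqr]; exact hpq
    rw [show ccomp M (.inl (.inr ν)) (.inl (.inr ρ))
        = (.inl (.inr (Γ.comp ν ρ)) : LPath M) from rfl]
    rw [ccomp_pg M p ν hpq (hz_pg M p ν hpq)]
    rw [ccomp_pg M
      ⟨(Λ.comp p.1.1 (M.φl p.1.2 ν), M.φx p.1.2 ν), hz_pg M p ν hpq⟩ ρ hx1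
      (hz_pg M _ ρ hx1)]
    rw [ccomp_pg M p (Γ.comp ν ρ) hcn (hz_pg M p _ hcn)]
    congr 1
    refine Subtype.ext (Prod.ext ?_ ?_)
    · show Λ.comp (Λ.comp p.1.1 (M.φl p.1.2 ν)) (M.φl (M.φx p.1.2 ν) ρ)
        = Λ.comp p.1.1 (M.φl p.1.2 (Γ.comp ν ρ))
      rw [M.mult_φl _ _ _ hpq hqr]
      have ha : Λ.src p.1.1 = Λ.rng (M.φl p.1.2 ν) := by
        rw [M.rng_φl _ _ hpq]; exact p.2
      have hb : Λ.src (M.φl p.1.2 ν) = Λ.rng (M.φl (M.φx p.1.2 ν) ρ) := by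
        rw [M.src_φl _ _ hpq, M.rng_φl _ _ hx1]
      rw [Λ.comp_assoc _ _ _ ha hb]
    · show M.φx (M.φx p.1.2 ν) ρ = M.φx p.1.2 (Γ.comp ν ρ)
      rw [M.mult_φx _ _ _ hpq hqr]

lemma init_of_snoc_eq {f : Fin k → ℕ} {a : ℕ} {m : Fin (k+1) → ℕ}
    (h : (Fin.snoc f a : Fin (k+1) → ℕ) = m) : f = Fin.init m := by
  rw [← h, Fin.init_snoc]

lemma last_of_snoc_eq {f : Fin k → ℕ} {a : ℕ} {m : Fin (k+1) → ℕ}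
    (h : (Fin.snoc f a : Fin (k+1) → ℕ) = m) : m (Fin.last k) = a := by
  rw [← h, Fin.snoc_last]

lemma snoc_eq {f : Fin k → ℕ} {a : ℕ} {m : Fin (k+1) → ℕ}
    (h1 : f = Fin.init m) (h2 : m (Fin.last k) = a) :
    (Fin.snoc f a : Fin (k+1) → ℕ) = m := by
  rw [h1, ← h2, Fin.snoc_init_self]

lemma link_factor : ∀ (p : LPath M) (m n : Fin (k+1) → ℕ),
    cd M p = m + n →
    ∃! μν : LPath M × LPath M, csrc M μν.1 = crng M μν.2 ∧ cd M μν.1 = m ∧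
      cd M μν.2 = n ∧ ccomp M μν.1 μν.2 = p := by
  rintro ((lam|g)|pp) m n hd
  · -- p in Λ
    have hlast : (0 : ℕ) = m (Fin.last k) + n (Fin.last k) := by
      have h := congrFun hd (Fin.last k)
      simpa only [cd, Fin.snoc_last, Pi.add_apply] using h
    have hm0 : m (Fin.last k) = 0 := by omega
    have hn0 : n (Fin.last k) = 0 := by omega
    have hinit : Λ.d lam = Fin.init m + Fin.init n := by
      funext i
      have h := congrFun hd i.castSucc
      simpa only [cd, Fin.snoc_castSucc, Pi.add_apply, Fin.init] using h
    obtain ⟨⟨μ, ν⟩, ⟨hc, hmd, hnd, hcomp⟩, huniq⟩ := Λ.factor lam _ _ hinit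
    refine ⟨(.inl (.inl μ), .inl (.inl ν)), ⟨?_, ?_, ?_, ?_⟩, ?_⟩
    · show (Sum.inl (Λ.src μ) : OΛ ⊕ OΓ) = Sum.inl (Λ.rng ν)
      rw [hc]
    · exact snoc_eq hmd hm0
    · exact snoc_eq hnd hn0
    · show (.inl (.inl (Λ.comp μ ν)) : LPath M) = .inl (.inl lam)
      rw [hcomp]
    · rintro ⟨((y₁|y₁)|y₁), ((y₂|y₂)|y₂)⟩ ⟨hc', hm', hn', hcomp'⟩
      · -- (Λ, Λ): the genuine case
        simp only [csrc, crng, Sum.inl.injEq] at hc'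
        simp only [ccomp, Sum.inl.injEq, Sum.inr.injEq] at hcomp'
        have h := huniq (y₁, y₂)
          ⟨hc', init_of_snoc_eq hm', init_of_snoc_eq hn', hcomp'⟩
        have h1 : y₁ = μ := congrArg Prod.fst h
        have h2 : y₂ = ν := congrArg Prod.snd h
        rw [h1, h2]
      · simp only [csrc, crng, reduceCtorEq] at hc'
      · exfalso
        have h := last_of_snoc_eq hn'
        rw [hn0] at h; exact absurd h (by norm_num)
      · simp only [csrc, crng, reduceCtorEq] at hc'
      · simp only [ccomp, Sum.inl.injEq, reduceCtorEq] at hcomp'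
      · exfalso
        have h := last_of_snoc_eq hn'
        rw [hn0] at h; exact absurd h (by norm_num)
      · exfalso
        have h := last_of_snoc_eq hm'
        rw [hm0] at h; exact absurd h (by norm_num)
      · exfalso
        have h := last_of_snoc_eq hm'
        rw [hm0] at h; exact absurd h (by norm_num)
      · exfalso
        have h := last_of_snoc_eq hm'
        rw [hm0] at h; exact absurd h (by norm_num)
  · -- p in Γ
    have hlast : (0 : ℕ) = m (Fin.last k) + n (Fin.last k) := by
      have h := congrFun hd (Fin.last k)
      simpa only [cd, Fin.snoc_last, Pi.add_apply] using h
    have hm0 : m (Fin.last k) = 0 := by omega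
    have hn0 : n (Fin.last k) = 0 := by omega
    have hinit : Γ.d g = Fin.init m + Fin.init n := by
      funext i
      have h := congrFun hd i.castSucc
      simpa only [cd, Fin.snoc_castSucc, Pi.add_apply, Fin.init] using h
    obtain ⟨⟨μ, ν⟩, ⟨hc, hmd, hnd, hcomp⟩, huniq⟩ := Γ.factor g _ _ hinit
    refine ⟨(.inl (.inr μ), .inl (.inr ν)), ⟨?_, ?_, ?_, ?_⟩, ?_⟩
    · show (Sum.inr (Γ.src μ) : OΛ ⊕ OΓ) = Sum.inr (Γ.rng ν)
      rw [hc]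
    · exact snoc_eq hmd hm0
    · exact snoc_eq hnd hn0
    · show (.inl (.inr (Γ.comp μ ν)) : LPath M) = .inl (.inr g)
      rw [hcomp]
    · rintro ⟨((y₁|y₁)|y₁), ((y₂|y₂)|y₂)⟩ ⟨hc', hm', hn', hcomp'⟩
      · simp only [ccomp, Sum.inl.injEq, reduceCtorEq] at hcomp'
      · simp only [csrc, crng, reduceCtorEq] at hc'
      · exfalso
        have h := last_of_snoc_eq hn'
        rw [hn0] at h; exact absurd h (by norm_num)
      · simp only [csrc, crng, reduceCtorEq] at hc'
      · -- (Γ, Γ): the genuine case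
        simp only [csrc, crng, Sum.inr.injEq] at hc'
        simp only [ccomp, Sum.inl.injEq, Sum.inr.injEq] at hcomp'
        have h := huniq (y₁, y₂)
          ⟨hc', init_of_snoc_eq hm', init_of_snoc_eq hn', hcomp'⟩
        have h1 : y₁ = μ := congrArg Prod.fst h
        have h2 : y₂ = ν := congrArg Prod.snd h
        rw [h1, h2]
      · exfalso
        have h := last_of_snoc_eq hn'
        rw [hn0] at h; exact absurd h (by norm_num)
      · exfalso
        have h := last_of_snoc_eq hm'
        rw [hm0] at h; exact absurd h (by norm_num)
      · exfalso
        have h := last_of_snoc_eq hm'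
        rw [hm0] at h; exact absurd h (by norm_num)
      · exfalso
        have h := last_of_snoc_eq hm'
        rw [hm0] at h; exact absurd h (by norm_num)
  · -- p = (lam, x) in Λ *_{Λ⁰} X
    have hlast : (1 : ℕ) = m (Fin.last k) + n (Fin.last k) := by
      have h := congrFun hd (Fin.last k)
      simpa only [cd, Fin.snoc_last, Pi.add_apply] using h
    have hinit : Λ.d pp.1.1 = Fin.init m + Fin.init n := by
      funext i
      have h := congrFun hd i.castSucc
      simpa only [cd, Fin.snoc_castSucc, Pi.add_apply, Fin.init] using h
    have hcase : (m (Fin.last k) = 0 ∧ n (Fin.last k) = 1) ∨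
        (m (Fin.last k) = 1 ∧ n (Fin.last k) = 0) := by omega
    rcases hcase with ⟨hm0, hn1⟩ | ⟨hm1, hn0⟩
    · -- factorisation of the form μ · (ν, x)
      obtain ⟨⟨μ, ν⟩, ⟨hc, hmd, hnd, hcomp⟩, huniq⟩ := Λ.factor pp.1.1 _ _ hinit
      have hsν : Λ.src ν = M.r pp.1.2 := by
        rw [← Λ.src_comp _ _ hc, hcomp]; exact pp.2
      refine ⟨(.inl (.inl μ), .inr ⟨(ν, pp.1.2), hsν⟩), ⟨?_, ?_, ?_, ?_⟩, ?_⟩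
      · show (Sum.inl (Λ.src μ) : OΛ ⊕ OΓ) = Sum.inl (Λ.rng ν)
        rw [hc]
      · exact snoc_eq hmd hm0
      · exact snoc_eq hnd hn1
      · rw [ccomp_lp M μ ⟨(ν, pp.1.2), hsν⟩ hc (hz_lp M μ _ hc)]
        congr 1
        exact Subtype.ext (Prod.ext hcomp rfl)
      · rintro ⟨((y₁|y₁)|y₁), ((y₂|y₂)|y₂)⟩ ⟨hc', hm', hn', hcomp'⟩
        · exfalso
          have h := last_of_snoc_eq hn'
          rw [hn1] at h; exact absurd h (by norm_num)
        · simp only [csrc, crng, reduceCtorEq] at hc'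
        · -- genuine case: (Λ, fibre)
          simp only [csrc, crng, Sum.inl.injEq] at hc'
          rw [ccomp_lp M y₁ y₂ hc' (hz_lp M y₁ y₂ hc')] at hcomp'
          have hval : (Λ.comp y₁ y₂.1.1, y₂.1.2) = pp.1 :=
            congrArg Subtype.val (Sum.inr_injective hcomp')
          have hval1 : Λ.comp y₁ y₂.1.1 = pp.1.1 := by rw [← hval]
          have hval2 : y₂.1.2 = pp.1.2 := by rw [← hval]
          have h := huniq (y₁, y₂.1.1)
            ⟨hc', init_of_snoc_eq hm', init_of_snoc_eq hn', hval1⟩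
          have h1 : y₁ = μ := congrArg Prod.fst h
          have h2 : y₂.1.1 = ν := congrArg Prod.snd h
          refine Prod.ext ?_ ?_
          · show (.inl (.inl y₁) : LPath M) = .inl (.inl μ)
            rw [h1]
          · show (.inr y₂ : LPath M) = .inr ⟨(ν, pp.1.2), hsν⟩
            congr 1
            exact Subtype.ext (Prod.ext h2 hval2)
        · simp only [csrc, crng, reduceCtorEq] at hc'
        · exfalso
          have h := last_of_snoc_eq hn'
          rw [hn1] at h; exact absurd h (by norm_num)
        · simp only [csrc, crng, reduceCtorEq] at hc'
        · exfalso
          have h := last_of_snoc_eq hm'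
          rw [hm0] at h; exact absurd h (by norm_num)
        · exfalso
          have h := last_of_snoc_eq hm'
          rw [hm0] at h; exact absurd h (by norm_num)
        · exfalso
          have h := last_of_snoc_eq hm'
          rw [hm0] at h; exact absurd h (by norm_num)
    · -- factorisation of the form (α, x') · ν
      obtain ⟨⟨α, β⟩, ⟨hc, hmd, hnd, hcomp⟩, huniqL⟩ := Λ.factor pp.1.1 _ _ hinit
      have hsβ : Λ.src β = M.r pp.1.2 := by
        rw [← Λ.src_comp _ _ hc, hcomp]; exact pp.2
      obtain ⟨⟨x', ν⟩, ⟨hsx', hφl, hφx⟩, huniqB⟩ := M.bij β pp.1.2 hsβ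
      have hα : Λ.src α = M.r x' := by rw [hc, ← hφl, M.rng_φl _ _ hsx']
      have hdν : Γ.d ν = Fin.init n := by
        rw [← M.d_φl _ _ hsx', hφl]; exact hnd
      refine ⟨(.inr ⟨(α, x'), hα⟩, .inl (.inr ν)), ⟨?_, ?_, ?_, ?_⟩, ?_⟩
      · show (Sum.inr (M.s x') : OΛ ⊕ OΓ) = Sum.inr (Γ.rng ν)
        rw [hsx']
      · exact snoc_eq hmd hm1
      · exact snoc_eq hdν hn0
      · rw [ccomp_pg M ⟨(α, x'), hα⟩ ν hsx' (hz_pg M _ ν hsx')]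
        congr 1
        refine Subtype.ext (Prod.ext ?_ ?_)
        · show Λ.comp α (M.φl x' ν) = pp.1.1
          rw [hφl]; exact hcomp
        · exact hφx
      · rintro ⟨((y₁|y₁)|y₁), ((y₂|y₂)|y₂)⟩ ⟨hc', hm', hn', hcomp'⟩
        · exfalso
          have h := last_of_snoc_eq hm'
          rw [hm1] at h; exact absurd h (by norm_num)
        · exfalso
          have h := last_of_snoc_eq hm'
          rw [hm1] at h; exact absurd h (by norm_num)
        · exfalso
          have h := last_of_snoc_eq hm'
          rw [hm1] at h; exact absurd h (by norm_num)
        · exfalso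
          have h := last_of_snoc_eq hm'
          rw [hm1] at h; exact absurd h (by norm_num)
        · exfalso
          have h := last_of_snoc_eq hm'
          rw [hm1] at h; exact absurd h (by norm_num)
        · exfalso
          have h := last_of_snoc_eq hm'
          rw [hm1] at h; exact absurd h (by norm_num)
        · simp only [csrc, crng, reduceCtorEq] at hc'
        · -- genuine case: (fibre, Γ)
          simp only [csrc, crng, Sum.inr.injEq] at hc'
          rw [ccomp_pg M y₁ y₂ hc' (hz_pg M y₁ y₂ hc')] at hcomp'
          have hval : (Λ.comp y₁.1.1 (M.φl y₁.1.2 y₂), M.φx y₁.1.2 y₂) = pp.1 :=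
            congrArg Subtype.val (Sum.inr_injective hcomp')
          have hval1 : Λ.comp y₁.1.1 (M.φl y₁.1.2 y₂) = pp.1.1 := by
            rw [← hval]
          have hval2 : M.φx y₁.1.2 y₂ = pp.1.2 := by rw [← hval]
          have hcompat : Λ.src y₁.1.1 = Λ.rng (M.φl y₁.1.2 y₂) := by
            rw [M.rng_φl _ _ hc']; exact y₁.2
          have hdφl : Λ.d (M.φl y₁.1.2 y₂) = Fin.init n := by
            rw [M.d_φl _ _ hc']; exact init_of_snoc_eq hn'
          have hL := huniqL (y₁.1.1, M.φl y₁.1.2 y₂)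
            ⟨hcompat, init_of_snoc_eq hm', hdφl, hval1⟩
          have hL1 : y₁.1.1 = α := congrArg Prod.fst hL
          have hL2 : M.φl y₁.1.2 y₂ = β := congrArg Prod.snd hL
          have hB := huniqB (y₁.1.2, y₂) ⟨hc', hL2, hval2⟩
          have hB1 : y₁.1.2 = x' := congrArg Prod.fst hB
          have hB2 : y₂ = ν := congrArg Prod.snd hB
          refine Prod.ext ?_ ?_
          · show (.inr y₁ : LPath M) = .inr ⟨(α, x'), hα⟩
            congr 1
            exact Subtype.ext (Prod.ext hL1 hB1)
          · show (.inl (.inr y₂) : LPath M) = .inl (.inr ν)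
            rw [hB2]
        · exfalso
          have h := last_of_snoc_eq hn'
          rw [hn0] at h; exact absurd h (by norm_num)

noncomputable def linkStr : KGraphStr (k+1) (OΛ ⊕ OΓ) (LPath M) where
  src := csrc M
  rng := crng M
  ident := cident M
  comp := ccomp M
  d := cd M
  countable := by
    have := Λ.countable; have := Γ.countable; have := M.countable
    infer_instance
  nonemptyObj := ⟨.inl Λ.nonemptyObj.some⟩
  src_ident v := by cases v <;> simp [csrc, cident, Λ.src_ident, Γ.src_ident]
  rng_ident v := by cases v <;> simp [crng, cident, Λ.rng_ident, Γ.rng_ident]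
  d_ident v := by
    cases v <;> simp [cd, cident, Λ.d_ident, Γ.d_ident, snoc_zero]
  src_comp := by
    rintro ((μ|μ)|p) ((ν|ν)|q) h
    · simp only [csrc, crng, Sum.inl.injEq] at h
      simp only [ccomp, csrc, Sum.inl.injEq]
      exact Λ.src_comp _ _ h
    · simp only [csrc, crng, reduceCtorEq] at h
    · simp only [csrc, crng, Sum.inl.injEq] at h
      rw [ccomp_lp M μ q h (hz_lp M μ q h)]
      rfl
    · simp only [csrc, crng, reduceCtorEq] at h
    · simp only [csrc, crng, Sum.inr.injEq] at h
      simp only [ccomp, csrc, Sum.inr.injEq]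
      exact Γ.src_comp _ _ h
    · simp only [csrc, crng, reduceCtorEq] at h
    · simp only [csrc, crng, reduceCtorEq] at h
    · simp only [csrc, crng, Sum.inr.injEq] at h
      rw [ccomp_pg M p ν h (hz_pg M p ν h)]
      simp only [csrc, Sum.inr.injEq]
      exact M.s_φx _ _ h
    · simp only [csrc, crng, reduceCtorEq] at h
  rng_comp := by
    rintro ((μ|μ)|p) ((ν|ν)|q) h
    · simp only [csrc, crng, Sum.inl.injEq] at h
      simp only [ccomp, crng, Sum.inl.injEq]
      exact Λ.rng_comp _ _ h
    · simp only [csrc, crng, reduceCtorEq] at h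
    · simp only [csrc, crng, Sum.inl.injEq] at h
      rw [ccomp_lp M μ q h (hz_lp M μ q h)]
      simp only [crng, Sum.inl.injEq]
      exact Λ.rng_comp _ _ h
    · simp only [csrc, crng, reduceCtorEq] at h
    · simp only [csrc, crng, Sum.inr.injEq] at h
      simp only [ccomp, crng, Sum.inr.injEq]
      exact Γ.rng_comp _ _ h
    · simp only [csrc, crng, reduceCtorEq] at h
    · simp only [csrc, crng, reduceCtorEq] at h
    · simp only [csrc, crng, Sum.inr.injEq] at h
      rw [ccomp_pg M p ν h (hz_pg M p ν h)]
      simp only [crng, Sum.inl.injEq]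
      have h1 : Λ.src p.1.1 = Λ.rng (M.φl p.1.2 ν) := by
        rw [M.rng_φl _ _ h]; exact p.2
      exact Λ.rng_comp _ _ h1
    · simp only [csrc, crng, reduceCtorEq] at h
  d_comp := by
    rintro ((μ|μ)|p) ((ν|ν)|q) h
    · simp only [csrc, crng, Sum.inl.injEq] at h
      simp only [ccomp, cd, snoc_add, Λ.d_comp _ _ h]
    · simp only [csrc, crng, reduceCtorEq] at h
    · simp only [csrc, crng, Sum.inl.injEq] at h
      rw [ccomp_lp M μ q h (hz_lp M μ q h)]
      simp only [cd, snoc_add, Λ.d_comp _ _ h]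
    · simp only [csrc, crng, reduceCtorEq] at h
    · simp only [csrc, crng, Sum.inr.injEq] at h
      simp only [ccomp, cd, snoc_add, Γ.d_comp _ _ h]
    · simp only [csrc, crng, reduceCtorEq] at h
    · simp only [csrc, crng, reduceCtorEq] at h
    · simp only [csrc, crng, Sum.inr.injEq] at h
      rw [ccomp_pg M p ν h (hz_pg M p ν h)]
      have h1 : Λ.src p.1.1 = Λ.rng (M.φl p.1.2 ν) := by
        rw [M.rng_φl _ _ h]; exact p.2
      simp only [cd, snoc_add, Λ.d_comp _ _ h1, M.d_φl _ _ h]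
    · simp only [csrc, crng, reduceCtorEq] at h
  comp_ident := by
    rintro ((μ|μ)|p)
    · simp only [csrc, cident, ccomp, Λ.comp_ident]
    · simp only [csrc, cident, ccomp, Γ.comp_ident]
    · show ccomp M (.inr p) (.inl (.inr (Γ.ident (M.s p.1.2)))) = .inr p
      have h : M.s p.1.2 = Γ.rng (Γ.ident (M.s p.1.2)) := (Γ.rng_ident _).symm
      rw [ccomp_pg M p _ h (hz_pg M p _ h)]
      congr 1
      refine Subtype.ext (Prod.ext ?_ ?_)
      · show Λ.comp p.1.1 (M.φl p.1.2 (Γ.ident (M.s p.1.2))) = p.1.1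
        rw [phil_ident, ← p.2, Λ.comp_ident]
      · exact phix_ident M p.1.2
  ident_comp := by
    rintro ((μ|μ)|p)
    · simp only [crng, cident, ccomp, Λ.ident_comp]
    · simp only [crng, cident, ccomp, Γ.ident_comp]
    · show ccomp M (.inl (.inl (Λ.ident (Λ.rng p.1.1)))) (.inr p) = .inr p
      have h : Λ.src (Λ.ident (Λ.rng p.1.1)) = Λ.rng p.1.1 := Λ.src_ident _
      rw [ccomp_lp M _ p h (hz_lp M _ p h)]
      congr 1
      exact Subtype.ext (Prod.ext (Λ.ident_comp _) rfl)
  comp_assoc := link_assoc M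
  factor := link_factor M

end LinkAux

/-- given a `(Λ,Γ)` k-morph `X`, the set
`Σ = Λ ⊔ Γ ⊔ (Λ *_{Λ⁰} X)` with the indicated degree map, range, source and
composition carries the structure of a `(k+1)`-graph (the degree map satisfies
the factorisation property and composition is associative). -/
theorem linking_construction {k : ℕ} {OΛ PΛ OΓ PΓ X : Type}
    {Λ : KGraphStr k OΛ PΛ} {Γ : KGraphStr k OΓ PΓ}
    (M : KMorph Λ Γ X) :
    ∃ S : KGraphStr (k+1) (OΛ ⊕ OΓ)
        ((PΛ ⊕ PΓ) ⊕ {p : PΛ × X // Λ.src p.1 = M.r p.2}),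
      -- degree map
      (∀ lam : PΛ, S.d (.inl (.inl lam)) = Fin.snoc (Λ.d lam) 0) ∧
      (∀ g : PΓ, S.d (.inl (.inr g)) = Fin.snoc (Γ.d g) 0) ∧
      (∀ p : {p : PΛ × X // Λ.src p.1 = M.r p.2},
        S.d (.inr p) = Fin.snoc (Λ.d p.1.1) 1) ∧
      -- range and source
      (∀ lam : PΛ, S.rng (.inl (.inl lam)) = .inl (Λ.rng lam)) ∧
      (∀ lam : PΛ, S.src (.inl (.inl lam)) = .inl (Λ.src lam)) ∧
      (∀ g : PΓ, S.rng (.inl (.inr g)) = .inr (Γ.rng g)) ∧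
      (∀ g : PΓ, S.src (.inl (.inr g)) = .inr (Γ.src g)) ∧
      (∀ p : {p : PΛ × X // Λ.src p.1 = M.r p.2},
        S.rng (.inr p) = .inl (Λ.rng p.1.1)) ∧
      (∀ p : {p : PΛ × X // Λ.src p.1 = M.r p.2},
        S.src (.inr p) = .inr (M.s p.1.2)) ∧
      -- identities
      (∀ v : OΛ, S.ident (.inl v) = .inl (.inl (Λ.ident v))) ∧
      (∀ w : OΓ, S.ident (.inr w) = .inl (.inr (Γ.ident w))) ∧
      -- composition within Λ ⊔ Γ
      (∀ mu nu : PΛ, Λ.src mu = Λ.rng nu →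
        S.comp (.inl (.inl mu)) (.inl (.inl nu)) = .inl (.inl (Λ.comp mu nu))) ∧
      (∀ mu nu : PΓ, Γ.src mu = Γ.rng nu →
        S.comp (.inl (.inr mu)) (.inl (.inr nu)) = .inl (.inr (Γ.comp mu nu))) ∧
      -- μ·(ν,x) = (μν, x)
      (∀ (mu : PΛ) (p : {p : PΛ × X // Λ.src p.1 = M.r p.2}),
        Λ.src mu = Λ.rng p.1.1 →
        ∃ z, S.comp (.inl (.inl mu)) (.inr p) = .inr z ∧
          z.1.1 = Λ.comp mu p.1.1 ∧ z.1.2 = p.1.2) ∧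
      -- (μ,x)·ν = (μν', x') where φ(x,ν) = (ν',x')
      (∀ (p : {p : PΛ × X // Λ.src p.1 = M.r p.2}) (nu : PΓ),
        M.s p.1.2 = Γ.rng nu →
        ∃ z, S.comp (.inr p) (.inl (.inr nu)) = .inr z ∧
          z.1.1 = Λ.comp p.1.1 (M.φl p.1.2 nu) ∧ z.1.2 = M.φx p.1.2 nu) := by
  refine ⟨LinkAux.linkStr M, fun _ => rfl, fun _ => rfl, fun _ => rfl,
    fun _ => rfl, fun _ => rfl, fun _ => rfl, fun _ => rfl, fun _ => rfl,
    fun _ => rfl, fun _ => rfl, fun _ => rfl, fun _ _ _ => rfl,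
    fun _ _ _ => rfl, ?_, ?_⟩
  · intro mu p h
    exact ⟨⟨(Λ.comp mu p.1.1, p.1.2), LinkAux.hz_lp M mu p h⟩,
      LinkAux.ccomp_lp M mu p h _, rfl, rfl⟩
  · intro p nu h
    exact ⟨⟨(Λ.comp p.1.1 (M.φl p.1.2 nu), M.φx p.1.2 nu),
        LinkAux.hz_pg M p nu h⟩,
      LinkAux.ccomp_pg M p nu h _, rfl, rfl⟩
end
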